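/- arXiv:2301.07466 — 3 statements merged into one kernel-verified Lean document; each statement's English description precedes it below -/
import Mathlib

section
/- (Theorem A) Let g be a positive odd integer and k ≥ 1 a positive integer. Then the k-fold iterate of the Collatz map applied to g·2^k − 1 equals g·3^k − 1, i.e. f^[k](g·2^k − 1) = g·3^k − 1, and moreover g·3^k − 1 is even. -/
/-- The (shortcut) Collatz map. -/
def collatz (n : ℕ) : ℕ := if n % 2 = 0 then n / 2 else (3 * n + 1) / 2

/-- The reduced Collatz (Syracuse) map: remove all factors of 2 from 3n+1. -/
def syracuse (n : ℕ) : ℕ := (3 * n + 1) / 2 ^ (padicValNat 2 (3 * n + 1))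

/-! Each step sends `2m - 1` to `3m - 1`, so the iterates of `g * 2 ^ k - 1` trade the factors
`2` of `g * 2 ^ k` for factors `3` one at a time. -/

-- For `m = 0` both sides are `0` by truncated subtraction.
theorem collatz_two_mul_sub_one (m : ℕ) : collatz (2 * m - 1) = 3 * m - 1 := by
  unfold collatz
  split <;> omega

theorem collatz_iterate_mul_two_pow_sub_one (g k : ℕ) :
    collatz^[k] (g * 2 ^ k - 1) = g * 3 ^ k - 1 := by
  induction k generalizing g with
  | zero => simp
  | succ k ih =>
    calc collatz^[k + 1] (g * 2 ^ (k + 1) - 1)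
        = collatz^[k] (collatz (2 * (g * 2 ^ k) - 1)) := by
          rw [Function.iterate_succ_apply]; ring_nf
      _ = collatz^[k] (3 * g * 2 ^ k - 1) := by rw [collatz_two_mul_sub_one, mul_assoc]
      _ = g * 3 ^ (k + 1) - 1 := by rw [ih, pow_succ]; ring_nf

theorem stmt3_general (g k : ℕ) (hgodd : Odd g) :
    collatz^[k] (g * 2 ^ k - 1) = g * 3 ^ k - 1 ∧ Even (g * 3 ^ k - 1) := by
  refine ⟨collatz_iterate_mul_two_pow_sub_one g k, ?_⟩
  have hodd : Odd (g * 3 ^ k) := hgodd.mul (Odd.pow (by decide))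
  exact Nat.Odd.sub_odd hodd odd_one

theorem stmt3 (g k : ℕ) (hg : 0 < g) (hgodd : Odd g) (hk : 1 ≤ k) :
    collatz^[k] (g * 2 ^ k - 1) = g * 3 ^ k - 1 ∧ Even (g * 3 ^ k - 1) :=
  stmt3_general g k hgodd
end

section
/- (Theorem S, Restriction 2) Suppose n > 0 does not reach 1 under the Collatz map f, while every positive integer m with m < n reaches 1. Then n is not congruent to 2 modulo 3, i.e. n % 3 ≠ 2. -/
lemma collatz_of_odd {n : ℕ} (h : n % 2 = 1) : collatz n = (3 * n + 1) / 2 := by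
  simp [collatz, h]

lemma exists_pos_lt_collatz_eq_of_mod_three_eq_two {n : ℕ} (h : n % 3 = 2) :
    ∃ m, 0 < m ∧ m < n ∧ collatz m = n :=
  ⟨(2 * n - 1) / 3, by omega, by omega, by rw [collatz_of_odd (by omega)]; omega⟩

lemma exists_iterate_collatz_apply_eq_one {m : ℕ} (h : ∃ j, collatz^[j] m = 1) :
    ∃ j, collatz^[j] (collatz m) = 1 := by
  obtain ⟨j, hj⟩ := h
  cases j with
  -- `m = 1`: use the cycle `1 ↦ 2 ↦ 1`
  | zero => exact ⟨1, by simp_all [collatz]⟩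
  | succ k => exact ⟨k, hj⟩

theorem stmt9_general (n : ℕ)
    (hdiv : ¬ ∃ j : ℕ, collatz^[j] n = 1)
    (hmin : ∀ m : ℕ, 0 < m → m < n → ∃ j : ℕ, collatz^[j] m = 1) :
    n % 3 ≠ 2 := by
  intro h
  obtain ⟨m, hm_pos, hm_lt, hm_image⟩ := exists_pos_lt_collatz_eq_of_mod_three_eq_two h
  exact hdiv (hm_image ▸ exists_iterate_collatz_apply_eq_one (hmin m hm_pos hm_lt))

theorem stmt9 (n : ℕ) (hn : 0 < n)
    (hdiv : ¬ ∃ j : ℕ, collatz^[j] n = 1)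
    (hmin : ∀ m : ℕ, 0 < m → m < n → ∃ j : ℕ, collatz^[j] m = 1) :
    n % 3 ≠ 2 :=
  stmt9_general n hdiv hmin
end

section
/- (Theorem S, Restriction 4) Suppose n > 0 does not reach 1 under the Collatz map f, while every positive integer m with m < n reaches 1. Then n is not congruent to 3 modulo 16, i.e. n % 16 ≠ 3. -/
theorem collatz_two_mul (k : ℕ) : collatz (2 * k) = k := by
  unfold collatz; split <;> omega

theorem collatz_two_mul_add_one (k : ℕ) : collatz (2 * k + 1) = 3 * k + 2 := by
  unfold collatz; split <;> omega

theorem collatz_iterate_four_sixteen_mul_add_three (k : ℕ) :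
    collatz^[4] (16 * k + 3) = 9 * k + 2 := by
  have h₁ : collatz (16 * k + 3) = 24 * k + 5 := by
    rw [show 16 * k + 3 = 2 * (8 * k + 1) + 1 by ring, collatz_two_mul_add_one]; ring
  have h₂ : collatz (24 * k + 5) = 36 * k + 8 := by
    rw [show 24 * k + 5 = 2 * (12 * k + 2) + 1 by ring, collatz_two_mul_add_one]; ring
  have h₃ : collatz (36 * k + 8) = 18 * k + 4 := by
    rw [show 36 * k + 8 = 2 * (18 * k + 4) by ring, collatz_two_mul]
  have h₄ : collatz (18 * k + 4) = 9 * k + 2 := by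
    rw [show 18 * k + 4 = 2 * (9 * k + 2) by ring, collatz_two_mul]
  simp only [Function.iterate_succ_apply', Function.iterate_zero_apply, h₁, h₂, h₃, h₄]

theorem Function.exists_iterate_eq_of_iterate {α : Type*} {f : α → α} {x a : α} (i : ℕ)
    (h : ∃ j, f^[j] (f^[i] x) = a) : ∃ j, f^[j] x = a := by
  obtain ⟨j, hj⟩ := h
  exact ⟨j + i, by rw [Function.iterate_add_apply, hj]⟩

theorem stmt11_general (n : ℕ)
    (hdiv : ¬ ∃ j : ℕ, collatz^[j] n = 1)
    (hmin : ∀ m : ℕ, 0 < m → m < n → ∃ j : ℕ, collatz^[j] m = 1) :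
    n % 16 ≠ 3 := by
  intro h
  obtain ⟨k, rfl⟩ : ∃ k, n = 16 * k + 3 := ⟨n / 16, by omega⟩
  apply hdiv
  apply Function.exists_iterate_eq_of_iterate 4
  rw [collatz_iterate_four_sixteen_mul_add_three]
  exact hmin (9 * k + 2) (by omega) (by omega)

theorem stmt11 (n : ℕ) (hn : 0 < n)
    (hdiv : ¬ ∃ j : ℕ, collatz^[j] n = 1)
    (hmin : ∀ m : ℕ, 0 < m → m < n → ∃ j : ℕ, collatz^[j] m = 1) :
    n % 16 ≠ 3 :=
  stmt11_general n hdiv hmin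
end
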